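/- (Correctness of Levenshtein's single-deletion decoder.) Let c be a codeword of the Varshamov–Tenengolts code VT(n) and let c′ ∈ D₋₁(c) be obtained from c by deleting one bit. Let ω be the weight of c′ and let s be the unique integer with 0 ≤ s ≤ n such that checksum(c′) + s ≡ 0 (mod n+1). If s ≤ ω, then c is recovered from c′ by inserting a 0 at the unique position such that exactly s ones of c′ lie to the right of the inserted bit (i.e., immediately to the left of the rightmost s ones of c′; if s = 0 the 0 is appended at the end). If s > ω, then c is recovered from c′ by inserting a 1 at the unique position such that exactly s − ω − 1 zeros of c′ lie to the left of the inserted bit (i.e., immediately to the right of the leftmost s − ω − 1 zeros of c′; if s − ω − 1 = 0 the 1 is inserted at the beginning). -/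

import Mathlib

/-- The checksum of a binary string `c = (c_1, …, c_n)` is `Σ_{i=1}^n i·c_i`. -/
def checksum (c : List Bool) : ℕ :=
  ∑ i ∈ Finset.range c.length, (i + 1) * (c.getD i false).toNat

/-- The Varshamov–Tenengolts code `VT(n)`. -/
def VT (n : ℕ) : Set (List Bool) :=
  {c | c.length = n ∧ (n + 1) ∣ checksum c}

/-- `del1 x`: the set of strings obtainable from `x` by deleting one bit. -/
def del1 (x : List Bool) : Set (List Bool) :=
  {w | ∃ p < x.length, w = x.take p ++ x.drop (p + 1)}

/-!
Write `c = u ++ b :: v`, so that `c' = u ++ v`. Reinserting `b` raises the checksum by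
`(|u| + 1)·b + wt v`, a number in `[0, n]`; hence it is the `s` of the decoder. If `b = 0`, then
`s = wt v ≤ ω`; if `b = 1`, then `s = |u| + 1 + wt v > ω` and `s - ω - 1` is the number of zeros
of `u`. Any other position with the same count of ones to the right (resp. zeros to the left)
differs from `|u|` by a run of zeros (resp. ones), and inserting a bit anywhere in a run of
equal bits gives the same string.
-/

lemma sum_range_length_getD_toNat (v : List Bool) :
    ∑ i ∈ Finset.range v.length, (v.getD i false).toNat = v.count true := by
  induction v with
  | nil => simp
  | cons b w ih =>
    rw [List.length_cons, Finset.sum_range_succ']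
    simp only [List.getD_cons_succ, List.getD_cons_zero, ih]
    cases b <;> simp

lemma checksum_cons (b : Bool) (v : List Bool) :
    checksum (b :: v) = b.toNat + checksum v + v.count true := by
  unfold checksum
  rw [List.length_cons, Finset.sum_range_succ']
  simp only [List.getD_cons_succ, List.getD_cons_zero, add_mul, one_mul,
    Finset.sum_add_distrib, sum_range_length_getD_toNat]
  ring

lemma checksum_append (u v : List Bool) :
    checksum (u ++ v) = checksum u + checksum v + u.length * v.count true := by
  induction u with
  | nil => simp [checksum]
  | cons b w ih =>
    rw [List.cons_append, checksum_cons, ih, checksum_cons, List.count_append,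
      List.length_cons]
    ring

lemma checksum_append_cons (u : List Bool) (b : Bool) (v : List Bool) :
    checksum (u ++ b :: v) = checksum (u ++ v) + (u.length + 1) * b.toNat + v.count true := by
  rw [checksum_append, checksum_append, checksum_cons, List.count_cons]
  cases b <;> simp <;> ring

lemma exists_eq_append_cons_of_mem_del1 {x y : List Bool} (h : y ∈ del1 x) :
    ∃ u b v, x = u ++ b :: v ∧ y = u ++ v := by
  obtain ⟨p, hp, rfl⟩ := h
  refine ⟨x.take p, x[p], x.drop (p + 1), ?_, rfl⟩
  rw [← List.drop_eq_getElem_cons hp, List.take_append_drop]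

lemma Nat.eq_of_dvd_add_of_dvd_add {m a s t : ℕ} (hs : s < m) (ht : t < m)
    (has : m ∣ a + s) (hat : m ∣ a + t) : s = t := by
  have hst : a + s ≡ a + t [MOD m] :=
    (Nat.modEq_zero_iff_dvd.2 has).trans (Nat.modEq_zero_iff_dvd.2 hat).symm
  exact (Nat.ModEq.add_left_cancel' a hst).eq_of_lt_of_lt hs ht

lemma eq_of_mem_VT_append_cons {n : ℕ} {u v : List Bool} {b : Bool} (hc : u ++ b :: v ∈ VT n)
    {s : ℕ} (hsn : s ≤ n) (hs : (n + 1) ∣ (checksum (u ++ v) + s)) :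
    s = (u.length + 1) * b.toNat + v.count true := by
  obtain ⟨hlen, hdvd⟩ := hc
  simp only [List.length_append, List.length_cons] at hlen
  have hv : v.count true ≤ v.length := List.count_le_length
  rw [checksum_append_cons, add_assoc] at hdvd
  refine Nat.eq_of_dvd_add_of_dvd_add (by omega) ?_ hs hdvd
  cases b <;> simp <;> omega

lemma take_append_cons_drop_eq_of_forall_eq {α : Type*} {b : α} {l : List α} {q p : ℕ} (hqp : q ≤ p)
    (hrun : ∀ x ∈ (l.drop q).take (p - q), x = b) :
    l.take q ++ b :: l.drop q = l.take p ++ b :: l.drop p := by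
  set m := (l.drop q).take (p - q)
  have hm : m = List.replicate m.length b := List.eq_replicate_iff.2 ⟨rfl, hrun⟩
  have htake : l.take p = l.take q ++ m := by
    rw [← List.take_add, Nat.add_sub_cancel' hqp]
  have hdrop : l.drop q = m ++ l.drop p := by
    rw [← l.drop_take_append_drop q (p - q), Nat.add_sub_cancel' hqp]
  have hcomm : b :: m = m ++ [b] := by
    rw [hm, ← List.replicate_succ, List.replicate_succ']
  rw [htake, hdrop, List.append_assoc, ← List.cons_append, hcomm, List.append_assoc,
    List.singleton_append]

lemma take_append_false_drop_eq_of_count_drop {l : List Bool} {q p : ℕ}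
    (h : (l.drop q).count true = (l.drop p).count true) :
    l.take q ++ false :: l.drop q = l.take p ++ false :: l.drop p := by
  wlog hqp : q ≤ p generalizing q p
  · exact (this h.symm (by omega)).symm
  refine take_append_cons_drop_eq_of_forall_eq hqp fun x hx => ?_
  rw [← l.drop_take_append_drop q (p - q), Nat.add_sub_cancel' hqp, List.count_append] at h
  have hnone : true ∉ (l.drop q).take (p - q) := List.count_eq_zero.1 (by omega)
  cases x
  · rfl
  · exact absurd hx hnone

lemma take_append_true_drop_eq_of_count_take {l : List Bool} {q p : ℕ}
    (h : (l.take q).count false = (l.take p).count false) :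
    l.take q ++ true :: l.drop q = l.take p ++ true :: l.drop p := by
  wlog hqp : q ≤ p generalizing q p
  · exact (this h.symm (by omega)).symm
  refine take_append_cons_drop_eq_of_forall_eq hqp fun x hx => ?_
  rw [← Nat.add_sub_cancel' hqp, List.take_add, List.count_append] at h
  have hnone : false ∉ (l.drop q).take (p - q) := List.count_eq_zero.1 (by omega)
  cases x
  · exact absurd hx hnone
  · rfl

lemma take_append_false_drop_append {u v : List Bool} {q : ℕ}
    (h : ((u ++ v).drop q).count true = v.count true) :
    (u ++ v).take q ++ false :: (u ++ v).drop q = u ++ false :: v := by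
  rw [take_append_false_drop_eq_of_count_drop (p := u.length) (by simpa using h)]
  simp

lemma take_append_true_drop_append {u v : List Bool} {q : ℕ}
    (h : ((u ++ v).take q).count false = u.count false) :
    (u ++ v).take q ++ true :: (u ++ v).drop q = u ++ true :: v := by
  rw [take_append_true_drop_eq_of_count_take (p := u.length) (by simpa using h)]
  simp

/-- Correctness of Levenshtein's single-deletion decoder for VT codes.
Let `c ∈ VT(n)`, let `c'` arise from `c` by one deletion, let `ω` be the weight
of `c'`, and let `s` be the unique integer with `0 ≤ s ≤ n` and
`checksum c' + s ≡ 0 (mod n+1)`.  If `s ≤ ω`, then `c` is recovered by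
inserting a `0` at the position with exactly `s` ones of `c'` to its right
(such a position exists, and any such insertion yields `c`, the inserted string
being the same for all of them).  If `s > ω`, then `c` is recovered by
inserting a `1` at the position with exactly `s − ω − 1` zeros of `c'` to its
left. -/
theorem levenshtein_decoder_correct (n : ℕ) (c : List Bool) (hc : c ∈ VT n)
    (c' : List Bool) (hc' : c' ∈ del1 c)
    (s : ℕ) (hsn : s ≤ n) (hs : (n + 1) ∣ (checksum c' + s)) :
    (s ≤ c'.count true →
      (∃ q ≤ c'.length, (c'.drop q).count true = s) ∧
      (∀ q ≤ c'.length, (c'.drop q).count true = s →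
        c = c'.take q ++ false :: c'.drop q)) ∧
    (c'.count true < s →
      (∃ q ≤ c'.length, (c'.take q).count false = s - c'.count true - 1) ∧
      (∀ q ≤ c'.length, (c'.take q).count false = s - c'.count true - 1 →
        c = c'.take q ++ true :: c'.drop q)) := by
  obtain ⟨u, b, v, rfl, rfl⟩ := exists_eq_append_cons_of_mem_del1 hc'
  have hs_eq := eq_of_mem_VT_append_cons hc hsn hs
  have hu := List.count_not_add_count u true
  simp only [List.count_append, List.length_append, Bool.not_true] at hu ⊢
  cases b with
  | false =>
    simp only [Bool.toNat_false, mul_zero, zero_add] at hs_eq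
    refine ⟨fun _ => ⟨⟨u.length, by omega, by simp [hs_eq]⟩, fun q _ hq => ?_⟩,
      fun _ => by omega⟩
    exact (take_append_false_drop_append (by omega)).symm
  | true =>
    simp only [Bool.toNat_true, mul_one] at hs_eq
    refine ⟨fun _ => by omega, fun _ => ⟨⟨u.length, by omega, by simp; omega⟩, fun q _ hq => ?_⟩⟩
    exact (take_append_true_drop_append (by omega)).symm
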